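/- For every integer k ≥ 0, the following identity of formal power series in q holds: the sum over all n of b(n;k) q^n equals q^{k²} · ∏_{j=1}^{k} (1 + q^j)/(1 − q^j), where b(n;k) is the number of basis partitions of n with Durfee square size k. -/

import Mathlib

open Finset
open scoped Classical

namespace BasisPartitions

/-! ### Ordinary partitions -/

/-- The parts of a partition, listed in weakly decreasing order. -/
def sparts {n : ℕ} (π : n.Partition) : List ℕ := π.parts.sort (· ≥ ·)

/-- `conj L j` is the number of parts that are `≥ j`, i.e. the `j`-th part of the
conjugate partition (for `j ≥ 1`). -/
def conj (L : List ℕ) (j : ℕ) : ℕ := L.countP (fun b => j ≤ b)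

/-- The Durfee square size: the largest `k` such that the `k`-th part is `≥ k`. -/
def durfee (L : List ℕ) : ℕ := (List.range L.length).countP (fun i => i + 1 ≤ L.getD i 0)

/-- The `(i+1)`-st successive rank `r_{i+1} = b_{i+1} - c_{i+1}` (0-indexed `i`). -/
def rank (L : List ℕ) (i : ℕ) : ℤ := (L.getD i 0 : ℤ) - (conj L (i + 1) : ℤ)

/-- The successive rank vector `(r_1, ..., r_k)` where `k` is the Durfee square size. -/
def ranks (L : List ℕ) : List ℤ := (List.range (durfee L)).map (rank L)

/-- A basis partition: the partitioned number is minimal among all partitions having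
the same successive rank vector. -/
def IsBasis {n : ℕ} (π : n.Partition) : Prop :=
  ∀ (m : ℕ) (π' : m.Partition), ranks (sparts π') = ranks (sparts π) → n ≤ m

/-- The signature: the number of distinct part sizes below the Durfee square. -/
def sig (L : List ℕ) : ℕ := ((L.drop (durfee L)).dedup).length

/-- `b(n;k)`: the number of basis partitions of `n` with Durfee square size `k`. -/
noncomputable def bCount (n k : ℕ) : ℕ :=
  Nat.card {π : n.Partition // IsBasis π ∧ durfee (sparts π) = k}

/-- `b(n,k,s)`: the number of basis partitions of `n` with Durfee square size `k`
and signature `s`. -/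
noncomputable def bCount3 (n k s : ℕ) : ℕ :=
  Nat.card {π : n.Partition // IsBasis π ∧ durfee (sparts π) = k ∧ sig (sparts π) = s}

/-- `B(n;j)`: the number of basis partitions of `n` with signature `j`. -/
noncomputable def BCount (n j : ℕ) : ℕ :=
  Nat.card {π : n.Partition // IsBasis π ∧ sig (sparts π) = j}

/-- Rogers–Ramanujan condition: exactly `k` parts, consecutive gaps `≥ 2`, last part `≥ 1`. -/
def RR (L : List ℕ) (k : ℕ) : Prop :=
  L.length = k ∧ (∀ i, i + 1 < k → L.getD (i + 1) 0 + 2 ≤ L.getD i 0) ∧ 1 ≤ L.getD (k - 1) 0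

/-- `t(π)` for a Rogers–Ramanujan partition: the number of gaps `> 2`, plus 1 if the
last part is `> 1`. -/
def tRR (L : List ℕ) (k : ℕ) : ℕ :=
  ((Finset.range (k - 1)).filter (fun i => L.getD (i + 1) 0 + 2 < L.getD i 0)).card +
    (if 1 < L.getD (k - 1) 0 then 1 else 0)

/-- Primary condition: exactly `k` parts, each part `≥ k`. -/
def Primary (L : List ℕ) (k : ℕ) : Prop := L.length = k ∧ ∀ x ∈ L, k ≤ x

/-- `t(π)` for a primary partition: the number of strict descents, plus 1 if the
last part is `> k`. -/
def tP (L : List ℕ) (k : ℕ) : ℕ :=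
  ((Finset.range (k - 1)).filter (fun i => L.getD (i + 1) 0 < L.getD i 0)).card +
    (if k < L.getD (k - 1) 0 then 1 else 0)

/-- A complete basis partition: every `j` with `1 ≤ j ≤ k-1` occurs as a part of `π_b`
(a row below the Durfee square) or as a part of `π_r` (a column length strictly to the
right of the Durfee square). -/
def IsComplete {n : ℕ} (π : n.Partition) : Prop :=
  ∀ j : ℕ, 1 ≤ j → j < durfee (sparts π) →
    j ∈ (sparts π).drop (durfee (sparts π)) ∨
      ∃ c : ℕ, durfee (sparts π) < c ∧ conj (sparts π) c = j

/-- `b_c(n)`: the number of complete basis partitions of `n`. -/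
noncomputable def bc (n : ℕ) : ℕ := Nat.card {π : n.Partition // IsBasis π ∧ IsComplete π}

/-! ### Partitions with non-repeating odd parts and their 2-modular graphs -/

/-- Partitions with non-repeating (distinct) odd parts. -/
def Pod {n : ℕ} (π : n.Partition) : Prop := ∀ x, Odd x → π.parts.count x ≤ 1

/-- The size (sum of entries) of the `c`-th column (1-indexed) of the 2-modular graph. -/
def mcolSize (L : List ℕ) (c : ℕ) : ℕ :=
  (L.map (fun x => if 2 * c ≤ x then 2 else if x = 2 * c - 1 then 1 else 0)).sum

/-- The length (number of entries) of the `c`-th column (1-indexed) of the 2-modular graph. -/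
def mcolLen (L : List ℕ) (c : ℕ) : ℕ := L.countP (fun x => 2 * c - 1 ≤ x)

/-- The number of entries in a row of the 2-modular graph recording the part `x`,
namely `⌈x/2⌉`. -/
def mrowLen (x : ℕ) : ℕ := (x + 1) / 2

/-- The 2-modular Durfee square size: the largest `k` with `⌈b_k/2⌉ ≥ k`. -/
def mdurfee (L : List ℕ) : ℕ := (List.range L.length).countP (fun i => 2 * i + 1 ≤ L.getD i 0)

/-- The `(i+1)`-st 2-modular successive rank: (size of row `i+1`) − (size of column `i+1`). -/
def mrank (L : List ℕ) (i : ℕ) : ℤ := (L.getD i 0 : ℤ) - (mcolSize L (i + 1) : ℤ)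

/-- The 2-modular successive rank vector. -/
def mranks (L : List ℕ) : List ℤ := (List.range (mdurfee L)).map (mrank L)

/-- A minimal basis partition in `P_{o,d}`: the partitioned number is minimal among all
partitions with non-repeating odd parts having the same 2-modular successive rank vector. -/
def MinBasis {n : ℕ} (μ : n.Partition) : Prop :=
  Pod μ ∧ ∀ (m : ℕ) (μ' : m.Partition), Pod μ' →
    mranks (sparts μ') = mranks (sparts μ) → n ≤ m

/-- A basis partition in `P_{o,d}`: no row of the 2-modular graph strictly below the Durfee
square has size equal to the size of a column strictly to the right of the Durfee square. -/
def PodBasis {n : ℕ} (π : n.Partition) : Prop :=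
  Pod π ∧ ∀ i, mdurfee (sparts π) ≤ i → i < (sparts π).length →
    ∀ c, mdurfee (sparts π) < c → mcolSize (sparts π) c ≠ (sparts π).getD i 0

/-- The signature of a basis partition in `P_{o,d}`: the number of distinct sizes among the
rows of the 2-modular graph strictly below the Durfee square. -/
def msig (L : List ℕ) : ℕ := ((L.drop (mdurfee L)).dedup).length

/-- The ℓ-signature: the number of distinct lengths among the rows of the 2-modular
graph strictly below the Durfee square. -/
def lsig (L : List ℕ) : ℕ := (((L.drop (mdurfee L)).map mrowLen).dedup).length

/-- `b(n;j)` for `P_{o,d}`: the number of basis partitions of `n` in `P_{o,d}` with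
signature `j`. -/
noncomputable def podB (n j : ℕ) : ℕ := Nat.card {π : n.Partition // PodBasis π ∧ msig (sparts π) = j}

/-- The number of odd parts. -/
def numOdd (L : List ℕ) : ℕ := L.countP (fun x => x % 2 = 1)

/-- A special partition: distinct parts with consecutive differences `≥ 4`, where a
difference equal to `4` is permitted only when both parts are even. -/
def Special (L : List ℕ) : Prop :=
  ∀ i, i + 1 < L.length →
    L.getD (i + 1) 0 + 4 ≤ L.getD i 0 ∧
      (L.getD i 0 = L.getD (i + 1) 0 + 4 → Even (L.getD i 0) ∧ Even (L.getD (i + 1) 0))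

/-- The `i`-th part of a special partition, with the convention that the part just after
the last one is `-2`. -/
def hpart (L : List ℕ) (i : ℕ) : ℤ := if i < L.length then (L.getD i 0 : ℤ) else -2

/-- `ℓ(π)`: the number of gaps `> 4` in a special partition, with the convention
`h_{k+1} = -2`. -/
def ell (L : List ℕ) : ℕ :=
  ((Finset.range L.length).filter (fun i => 4 < hpart L i - hpart L (i + 1))).card

/-!
Split a partition with Durfee square `k` into the square, the row excesses
`a₀ ≥ ⋯ ≥ a_{k-1}` to its right and the column lengths `β₁ ≥ ⋯ ≥ β_k` below it, with
`a_k = β_{k+1} = 0`. Its successive ranks are `z_i = a_i - β_{i+1}`. Abel summation gives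
`σ = k² + ∑_{i<k} (i+1) (Δa_i + Δβ_i)` with nonnegative drops `Δa_i = a_i - a_{i+1}`,
`Δβ_i = β_{i+1} - β_{i+2}`, while `z_i - z_{i+1} = Δa_i - Δβ_i`. Hence
`σ ≥ k² + ∑_{i<k} (i+1) |z_i - z_{i+1}|`, with equality iff no index has both drops positive,
and every `d ∈ ℤᵏ` arises as `(z_i - z_{i+1})_i` of exactly one partition attaining equality.
So the basis partitions with Durfee square `k` are in bijection with `ℤᵏ`, the partition of
`d` having size `k² + ∑ (i+1) |d_i|`; and `∑_{z ∈ ℤ} q^{s|z|} = (1 + q^s)/(1 - q^s)`.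
-/

section Durfee

lemma countP_range_eq_of_antitone {p : ℕ → Prop} [DecidablePred p] (hp : Antitone p)
    {n k : ℕ} (hk : ∀ i < k, p i) (hpk : ¬ p k) (hkn : k ≤ n) :
    (List.range n).countP (fun i => decide (p i)) = k := by
  obtain ⟨m, rfl⟩ := Nat.exists_eq_add_of_le hkn
  rw [List.range_add, List.countP_append, List.countP_eq_length.mpr, List.countP_eq_zero.mpr,
    List.length_range, add_zero]
  · simp only [List.mem_map, List.mem_range, decide_eq_true_eq]
    rintro _ ⟨t, -, rfl⟩ h
    exact hpk (hp (Nat.le_add_right k t) h)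
  · simpa using hk

variable {L : List ℕ}

lemma getD_antitone (hs : L.Pairwise (· ≥ ·)) : Antitone (L.getD · 0) := by
  intro i j hij
  dsimp only
  rcases hij.eq_or_lt with rfl | hlt
  · exact le_rfl
  by_cases hj : j < L.length
  · simp only [List.getD_eq_getElem _ _ hj, List.getD_eq_getElem _ _ (hlt.trans hj)]
    exact List.pairwise_iff_getElem.mp hs i j (hlt.trans hj) hj hlt
  · rw [List.getD_eq_default _ _ (not_lt.mp hj)]
    exact Nat.zero_le _

lemma durfee_eq_of (hs : L.Pairwise (· ≥ ·)) {k : ℕ} (hk : ∀ i < k, i + 1 ≤ L.getD i 0)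
    (hk' : L.getD k 0 ≤ k) : durfee L = k := by
  refine countP_range_eq_of_antitone (fun i j hij hj => ?_) hk (by omega) ?_
  · exact (Nat.succ_le_succ hij).trans (hj.trans (getD_antitone hs hij))
  · by_contra! hlen
    have := hk (k - 1) (by omega)
    rw [List.getD_eq_default _ _ (by omega)] at this
    omega

lemma durfee_spec (hs : L.Pairwise (· ≥ ·)) :
    (∀ i < durfee L, i + 1 ≤ L.getD i 0) ∧ L.getD (durfee L) 0 ≤ durfee L := by
  have hex : ∃ k, L.getD k 0 ≤ k := ⟨L.length, by simp⟩
  have hk : durfee L = Nat.find hex :=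
    durfee_eq_of hs (fun i hi => by have := Nat.find_min hex hi; omega) (Nat.find_spec hex)
  rw [hk]
  exact ⟨fun i hi => by have := Nat.find_min hex hi; omega, Nat.find_spec hex⟩

lemma durfee_le_length (L : List ℕ) : durfee L ≤ L.length :=
  (List.countP_le_length).trans (List.length_range).le

lemma durfee_le_getD (hs : L.Pairwise (· ≥ ·)) {i : ℕ} (hi : i < durfee L) :
    durfee L ≤ L.getD i 0 :=
  calc durfee L = (durfee L - 1) + 1 := by omega
    _ ≤ L.getD (durfee L - 1) 0 := (durfee_spec hs).1 _ (by omega)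
    _ ≤ L.getD i 0 := getD_antitone hs (by omega)

lemma getD_le_durfee (hs : L.Pairwise (· ≥ ·)) {i : ℕ} (hi : durfee L ≤ i) :
    L.getD i 0 ≤ durfee L :=
  (getD_antitone hs hi).trans (durfee_spec hs).2

end Durfee

section Decomposition

-- With `k = durfee L` and the notation of the header: `excess L i = a_i`, `legCount L j = β_j`,
-- `extRank L i = z_i`, `armDrop L i = Δa_i` and `legDrop L i = Δβ_i`.

def excess (L : List ℕ) (i : ℕ) : ℕ := L.getD i 0 - durfee L

def legCount (L : List ℕ) (j : ℕ) : ℕ := (L.drop (durfee L)).countP (fun x => j ≤ x)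

def extRank (L : List ℕ) (i : ℕ) : ℤ := excess L i - legCount L (i + 1)

def rankDiff (L : List ℕ) (i : ℕ) : ℤ := extRank L i - extRank L (i + 1)

def armDrop (L : List ℕ) (i : ℕ) : ℤ := excess L i - excess L (i + 1)

def legDrop (L : List ℕ) (i : ℕ) : ℤ := legCount L (i + 1) - legCount L (i + 2)

/-- The least size of a partition with the same successive ranks as `L`. -/
def minSum (L : List ℕ) : ℕ :=
  durfee L ^ 2 + ∑ i ∈ range (durfee L), (i + 1) * (rankDiff L i).natAbs

variable {L : List ℕ}

lemma excess_antitone (hs : L.Pairwise (· ≥ ·)) : Antitone (excess L) :=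
  fun _ _ hij => Nat.sub_le_sub_right (getD_antitone hs hij) _

lemma excess_eq_zero (hs : L.Pairwise (· ≥ ·)) {i : ℕ} (hi : durfee L ≤ i) : excess L i = 0 :=
  Nat.sub_eq_zero_of_le (getD_le_durfee hs hi)

lemma getD_eq_durfee_add_excess (hs : L.Pairwise (· ≥ ·)) {i : ℕ} (hi : i < durfee L) :
    L.getD i 0 = durfee L + excess L i :=
  (Nat.add_sub_of_le (durfee_le_getD hs hi)).symm

lemma legCount_antitone (L : List ℕ) : Antitone (legCount L) :=
  fun _ _ hij => List.countP_mono_left fun _ _ h => by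
    simp only [decide_eq_true_eq] at h ⊢
    omega

lemma le_durfee_of_mem_drop (hs : L.Pairwise (· ≥ ·)) {x : ℕ} (hx : x ∈ L.drop (durfee L)) :
    x ≤ durfee L := by
  obtain ⟨t, ht, rfl⟩ := List.getElem_of_mem hx
  rw [List.getElem_drop, ← List.getD_eq_getElem _ 0]
  exact getD_le_durfee hs (Nat.le_add_right _ _)

lemma legCount_eq_zero (hs : L.Pairwise (· ≥ ·)) {j : ℕ} (hj : durfee L < j) : legCount L j = 0 :=
  List.countP_eq_zero.mpr fun x hx => by
    have := le_durfee_of_mem_drop hs hx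
    simp only [decide_eq_true_eq]
    omega

lemma extRank_eq_zero (hs : L.Pairwise (· ≥ ·)) {i : ℕ} (hi : durfee L ≤ i) :
    extRank L i = 0 := by
  simp [extRank, excess_eq_zero hs hi, legCount_eq_zero hs (Nat.lt_succ_of_le hi)]

lemma conj_eq_durfee_add_legCount (hs : L.Pairwise (· ≥ ·)) {j : ℕ} (hj : j ≤ durfee L) :
    conj L j = durfee L + legCount L j := by
  conv_lhs => rw [conj, ← List.take_append_drop (durfee L) L]
  rw [List.countP_append, legCount, List.countP_eq_length.mpr, List.length_take,
    min_eq_left (durfee_le_length L)]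
  intro x hx
  obtain ⟨i, hi, rfl⟩ := List.getElem_of_mem hx
  rw [List.length_take] at hi
  rw [List.getElem_take, ← List.getD_eq_getElem _ 0, decide_eq_true_eq]
  exact hj.trans (durfee_le_getD hs (lt_min_iff.mp hi).1)

lemma rank_eq_extRank (hs : L.Pairwise (· ≥ ·)) {i : ℕ} (hi : i < durfee L) :
    rank L i = extRank L i := by
  rw [rank, extRank, conj_eq_durfee_add_legCount hs hi, getD_eq_durfee_add_excess hs hi]
  push_cast
  ring

lemma ranks_eq_map_extRank (hs : L.Pairwise (· ≥ ·)) :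
    ranks L = (List.range (durfee L)).map (extRank L) :=
  List.map_congr_left fun _ hi => rank_eq_extRank hs (List.mem_range.mp hi)

end Decomposition

section Size

lemma sum_eq_sum_range_countP {T : List ℕ} {k : ℕ} (hT : ∀ x ∈ T, x ≤ k) :
    T.sum = ∑ j ∈ range k, T.countP (fun x => j + 1 ≤ x) := by
  induction T with
  | nil => simp
  | cons x T ih =>
    have hx : ∑ j ∈ range k, (if j + 1 ≤ x then 1 else 0) = x := by
      have : {j ∈ range k | j + 1 ≤ x} = range x := by
        ext j
        have := hT x List.mem_cons_self
        simp only [mem_filter, mem_range]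
        omega
      rw [sum_boole, this, card_range, Nat.cast_id]
    simp only [List.sum_cons, List.countP_cons, sum_add_distrib, decide_eq_true_eq, hx,
      ih fun y hy => hT y (List.mem_cons_of_mem _ hy)]
    ring

lemma sum_range_eq_sum_mul_sub {R : Type*} [CommRing R] (f : ℕ → R) (k : ℕ) :
    ∑ i ∈ range k, f i = ∑ i ∈ range k, (i + 1) * (f i - f (i + 1)) + k * f k := by
  induction k with
  | zero => simp
  | succ k ih =>
    rw [sum_range_succ, sum_range_succ, ih]
    push_cast
    ring

variable {L : List ℕ}

lemma take_durfee (hs : L.Pairwise (· ≥ ·)) :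
    L.take (durfee L) = (List.range (durfee L)).map (fun i => durfee L + excess L i) := by
  refine List.ext_getElem (by simp [durfee_le_length]) fun i h₁ h₂ => ?_
  have hi : i < durfee L := by simpa using h₂
  rw [List.getElem_take, List.getElem_map, List.getElem_range, ← List.getD_eq_getElem _ 0,
    getD_eq_durfee_add_excess hs hi]

lemma sum_eq_sq_add (hs : L.Pairwise (· ≥ ·)) :
    L.sum = durfee L ^ 2 + ∑ i ∈ range (durfee L), excess L i
      + ∑ i ∈ range (durfee L), legCount L (i + 1) := by
  have htake : (L.take (durfee L)).sum = durfee L ^ 2 + ∑ i ∈ range (durfee L), excess L i := by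
    have hmap : ∀ f : ℕ → ℕ, ((List.range (durfee L)).map f).sum = ∑ i ∈ range (durfee L), f i :=
      fun f => by
        rw [sum_eq_multiset_sum, range_val, Multiset.range, Multiset.map_coe, Multiset.sum_coe]
    rw [take_durfee hs, hmap, sum_add_distrib, sum_const, card_range, smul_eq_mul, sq]
  have hdrop : (L.drop (durfee L)).sum = ∑ i ∈ range (durfee L), legCount L (i + 1) :=
    sum_eq_sum_range_countP fun _ hx => le_durfee_of_mem_drop hs hx
  conv_lhs => rw [← List.take_append_drop (durfee L) L]
  rw [List.sum_append, htake, hdrop]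

lemma armDrop_nonneg (hs : L.Pairwise (· ≥ ·)) (i : ℕ) : 0 ≤ armDrop L i :=
  sub_nonneg.mpr (Nat.cast_le.mpr (excess_antitone hs (Nat.le_succ i)))

lemma legDrop_nonneg (L : List ℕ) (i : ℕ) : 0 ≤ legDrop L i :=
  sub_nonneg.mpr (Nat.cast_le.mpr (legCount_antitone L (Nat.le_succ _)))

lemma rankDiff_eq_armDrop_sub_legDrop (L : List ℕ) (i : ℕ) :
    rankDiff L i = armDrop L i - legDrop L i := by
  simp only [rankDiff, extRank, armDrop, legDrop]
  ring

lemma sum_eq_sq_add_drops (hs : L.Pairwise (· ≥ ·)) :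
    (L.sum : ℤ) =
      durfee L ^ 2 + ∑ i ∈ range (durfee L), (i + 1) * (armDrop L i + legDrop L i) := by
  have harm := sum_range_eq_sum_mul_sub (fun i => (excess L i : ℤ)) (durfee L)
  have hleg := sum_range_eq_sum_mul_sub (fun i => (legCount L (i + 1) : ℤ)) (durfee L)
  simp only [excess_eq_zero hs le_rfl, legCount_eq_zero hs (Nat.lt_succ_self _), Nat.cast_zero,
    mul_zero, add_zero] at harm hleg
  rw [sum_eq_sq_add hs]
  push_cast
  rw [harm, hleg, add_assoc, ← sum_add_distrib]
  congr 1
  refine sum_congr rfl fun i _ => ?_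
  simp only [armDrop, legDrop]
  ring

lemma natCast_minSum (L : List ℕ) :
    (minSum L : ℤ) =
      durfee L ^ 2 + ∑ i ∈ range (durfee L), (i + 1) * ((rankDiff L i).natAbs : ℤ) := by
  simp [minSum]

lemma natAbs_rankDiff_le (hs : L.Pairwise (· ≥ ·)) (i : ℕ) :
    ((rankDiff L i).natAbs : ℤ) ≤ armDrop L i + legDrop L i := by
  have := armDrop_nonneg hs i
  have := legDrop_nonneg L i
  have := rankDiff_eq_armDrop_sub_legDrop L i
  omega

lemma minSum_le_sum (hs : L.Pairwise (· ≥ ·)) : minSum L ≤ L.sum := by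
  suffices (minSum L : ℤ) ≤ L.sum by exact_mod_cast this
  rw [natCast_minSum, sum_eq_sq_add_drops hs]
  gcongr with i
  exact natAbs_rankDiff_le hs i

/-- The Nolan–Savage–Wilf criterion. -/
lemma sum_eq_minSum_iff (hs : L.Pairwise (· ≥ ·)) :
    L.sum = minSum L ↔ ∀ i < durfee L, armDrop L i = 0 ∨ legDrop L i = 0 := by
  have hterm : ∀ i : ℕ,
      ((i : ℤ) + 1) * (rankDiff L i).natAbs = (i + 1) * (armDrop L i + legDrop L i) ↔
        armDrop L i = 0 ∨ legDrop L i = 0 := by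
    intro i
    rw [mul_right_inj' (by positivity)]
    have := armDrop_nonneg hs i
    have := legDrop_nonneg L i
    have := rankDiff_eq_armDrop_sub_legDrop L i
    omega
  rw [eq_comm, ← Int.natCast_inj, natCast_minSum, sum_eq_sq_add_drops hs, add_right_inj,
    sum_eq_sum_iff_of_le fun i _ => by gcongr; exact natAbs_rankDiff_le hs i]
  simp only [mem_range, hterm]

end Size

section Ranks

lemma eq_of_sub_succ_eq {G : Type*} [AddCommGroup G] {f g : ℕ → G} {k : ℕ}
    (hf : ∀ i, k ≤ i → f i = 0) (hg : ∀ i, k ≤ i → g i = 0)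
    (h : ∀ i < k, f i - f (i + 1) = g i - g (i + 1)) : f = g := by
  have telescope : ∀ φ : ℕ → G, φ k = 0 → ∀ i ≤ k, φ i = ∑ t ∈ Ico i k, (φ t - φ (t + 1)) := by
    intro φ hφ i hi
    rw [← neg_inj, ← sum_neg_distrib]
    simp only [neg_sub]
    rw [sum_Ico_sub φ hi, hφ, zero_sub]
  funext i
  by_cases hi : k ≤ i
  · rw [hf i hi, hg i hi]
  · rw [telescope f (hf k le_rfl) i (by omega), telescope g (hg k le_rfl) i (by omega)]
    exact sum_congr rfl fun t ht => h t (mem_Ico.mp ht).2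

variable {L L' : List ℕ}

lemma ranks_eq_ranks_iff (hs : L.Pairwise (· ≥ ·)) (hs' : L'.Pairwise (· ≥ ·)) :
    ranks L = ranks L' ↔
      durfee L = durfee L' ∧ ∀ i < durfee L, rankDiff L i = rankDiff L' i := by
  rw [ranks_eq_map_extRank hs, ranks_eq_map_extRank hs']
  constructor
  · intro h
    have hk : durfee L = durfee L' := by simpa using congrArg List.length h
    rw [← hk] at h
    have hz : extRank L = extRank L' := by
      funext i
      by_cases hi : i < durfee L
      · exact List.map_inj_left.mp h i (List.mem_range.mpr hi)
      · rw [extRank_eq_zero hs (not_lt.mp hi), extRank_eq_zero hs' (hk ▸ not_lt.mp hi)]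
    exact ⟨hk, fun i _ => by simp only [rankDiff, hz]⟩
  · rintro ⟨hk, hd⟩
    have hz : extRank L = extRank L' := eq_of_sub_succ_eq (fun _ hi => extRank_eq_zero hs hi)
      (fun _ hi => extRank_eq_zero hs' (hk ▸ hi)) hd
    rw [hk, hz]

lemma minSum_eq_of_ranks_eq (hs : L.Pairwise (· ≥ ·)) (hs' : L'.Pairwise (· ≥ ·))
    (h : ranks L = ranks L') : minSum L = minSum L' := by
  obtain ⟨hk, hd⟩ := (ranks_eq_ranks_iff hs hs').mp h
  rw [minSum, minSum, ← hk]
  congr 1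
  exact sum_congr rfl fun i hi => by rw [hd i (mem_range.mp hi)]

end Ranks

section Assembly

/-- The rows below a Durfee square of side `k` such that column `j ∈ [1, k]` has `B j` cells
below the square: the conjugate of `B` on `[1, k]`. -/
def legRows (k : ℕ) (B : ℕ → ℕ) : List ℕ :=
  (List.range (B 1)).map fun t => #{j ∈ Icc 1 k | t + 1 ≤ B j}

def assemble (k : ℕ) (A B : ℕ → ℕ) : List ℕ :=
  (List.range k).map (fun i => k + A i) ++ legRows k B

variable {k : ℕ} {A B : ℕ → ℕ}

lemma mem_legRows (hBk : B (k + 1) = 0) {x : ℕ} (hx : x ∈ legRows k B) :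
    1 ≤ x ∧ x ≤ k := by
  obtain ⟨t, ht, rfl⟩ := List.mem_map.mp hx
  rw [List.mem_range] at ht
  have hk : 1 ≤ k := by
    rcases Nat.eq_zero_or_pos k with rfl | hk
    · rw [zero_add] at hBk
      omega
    · exact hk
  refine ⟨card_pos.mpr ⟨1, ?_⟩, (card_filter_le _ _).trans (by simp)⟩
  simp only [mem_filter, mem_Icc]
  omega

lemma le_card_filter_Icc_iff {P : ℕ → Prop} [DecidablePred P] (hP : Antitone P) {j k : ℕ}
    (hj : 1 ≤ j) (hjk : j ≤ k) : j ≤ #{i ∈ Icc 1 k | P i} ↔ P j := by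
  constructor
  · intro h
    by_contra hPj
    have hsub : {i ∈ Icc 1 k | P i} ⊆ Icc 1 (j - 1) := fun i hi => by
      simp only [mem_filter, mem_Icc] at hi ⊢
      exact ⟨hi.1.1, by by_contra hij; exact hPj (hP (by omega) hi.2)⟩
    have := card_le_card hsub
    simp only [Nat.card_Icc] at this
    omega
  · intro hPj
    have hsub : Icc 1 j ⊆ {i ∈ Icc 1 k | P i} := fun i hi => by
      simp only [mem_filter, mem_Icc] at hi ⊢
      exact ⟨⟨hi.1, hi.2.trans hjk⟩, hP hi.2 hPj⟩
    have := card_le_card hsub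
    simp only [Nat.card_Icc] at this
    omega

lemma countP_legRows (hB : Antitone B) {j : ℕ} (hj : 1 ≤ j) (hjk : j ≤ k) :
    (legRows k B).countP (fun x => j ≤ x) = B j := by
  have key (t : ℕ) : j ≤ #{i ∈ Icc 1 k | t + 1 ≤ B i} ↔ t + 1 ≤ B j :=
    le_card_filter_Icc_iff (fun _ _ hab h => h.trans (hB hab)) hj hjk
  rw [legRows, List.countP_map]
  simp only [Function.comp_def, key]
  exact countP_range_eq_of_antitone (fun _ _ hab h => by omega) (fun _ h => h) (by omega) (hB hj)

lemma legRows_pairwise : (legRows k B).Pairwise (· ≥ ·) := by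
  rw [legRows, List.pairwise_map]
  exact List.pairwise_lt_range.imp fun hab =>
    card_le_card (monotone_filter_right _ fun _ h => by omega)

lemma assemble_pairwise (hA : Antitone A) (hBk : B (k + 1) = 0) :
    (assemble k A B).Pairwise (· ≥ ·) := by
  rw [assemble, List.pairwise_append, List.pairwise_map]
  refine ⟨List.pairwise_lt_range.imp fun hab => by
    have := hA hab.le; omega, legRows_pairwise, fun a ha b hb => ?_⟩
  obtain ⟨i, -, rfl⟩ := List.mem_map.mp ha
  have := (mem_legRows hBk hb).2
  omega

lemma assemble_pos (hBk : B (k + 1) = 0) {x : ℕ} (hx : x ∈ assemble k A B) :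
    0 < x := by
  rcases List.mem_append.mp hx with hx | hx
  · obtain ⟨i, hi, rfl⟩ := List.mem_map.mp hx
    have := List.mem_range.mp hi
    omega
  · exact (mem_legRows hBk hx).1

lemma getD_assemble {i : ℕ} (hi : i < k) : (assemble k A B).getD i 0 = k + A i := by
  rw [assemble, List.getD_append _ _ _ _ (by simpa using hi),
    List.getD_eq_getElem _ _ (by simpa using hi)]
  simp

lemma drop_assemble : (assemble k A B).drop k = legRows k B := by
  simp [assemble]

lemma durfee_assemble (hA : Antitone A) (hBk : B (k + 1) = 0) :
    durfee (assemble k A B) = k := by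
  refine durfee_eq_of (assemble_pairwise hA hBk) (fun i hi => by rw [getD_assemble hi]; omega) ?_
  rw [assemble, List.getD_append_right _ _ _ _ (by simp), List.length_map, List.length_range,
    Nat.sub_self]
  cases h : legRows k B with
  | nil => exact Nat.zero_le _
  | cons x T =>
    have hx : x ∈ legRows k B := h ▸ List.mem_cons_self
    exact (mem_legRows hBk hx).2

lemma excess_assemble (hA : Antitone A) (hBk : B (k + 1) = 0) (hAk : A k = 0)
    (i : ℕ) : excess (assemble k A B) i = A i := by
  rw [excess, durfee_assemble hA hBk]
  by_cases hi : i < k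
  · rw [getD_assemble hi]
    omega
  · have hle := getD_le_durfee (assemble_pairwise hA hBk) (i := i)
      (by rw [durfee_assemble hA hBk]; omega)
    rw [durfee_assemble hA hBk] at hle
    rw [Nat.le_zero.mp ((hA (not_lt.mp hi)).trans hAk.le)]
    omega

lemma legCount_assemble (hA : Antitone A) (hB : Antitone B) (hBk : B (k + 1) = 0) {j : ℕ}
    (hj : 1 ≤ j) : legCount (assemble k A B) j = B j := by
  rw [legCount, durfee_assemble hA hBk, drop_assemble]
  by_cases hjk : j ≤ k
  · exact countP_legRows hB hj hjk
  · have hBj := hB (show k + 1 ≤ j by omega)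
    rw [hBk, Nat.le_zero] at hBj
    rw [hBj, List.countP_eq_zero]
    intro x hx
    have := (mem_legRows hBk hx).2
    simp only [decide_eq_true_eq]
    omega

end Assembly

section Realization

lemma countP_le_eq_countP_succ_le_add_count (T : List ℕ) (x : ℕ) :
    T.countP (fun y => x ≤ y) = T.countP (fun y => x + 1 ≤ y) + T.count x := by
  induction T with
  | nil => simp
  | cons a T ih =>
    simp only [List.countP_cons, List.count_cons, ih, beq_iff_eq, decide_eq_true_eq]
    split_ifs <;> omega

lemma eq_of_countP_le_eq {T T' : List ℕ} (hs : T.Pairwise (· ≥ ·)) (hs' : T'.Pairwise (· ≥ ·))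
    (hpos : ∀ x ∈ T, 0 < x) (hpos' : ∀ x ∈ T', 0 < x)
    (h : ∀ j, 1 ≤ j → T.countP (fun x => j ≤ x) = T'.countP (fun x => j ≤ x)) : T = T' := by
  refine List.Perm.eq_of_pairwise' hs hs' (List.perm_iff_count.mpr fun x => ?_)
  rcases Nat.eq_zero_or_pos x with rfl | hx
  · rw [List.count_eq_zero.mpr fun h0 => (hpos 0 h0).false,
      List.count_eq_zero.mpr fun h0 => (hpos' 0 h0).false]
  · have := h x hx
    have := h (x + 1) (by omega)
    rw [countP_le_eq_countP_succ_le_add_count T x,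
      countP_le_eq_countP_succ_le_add_count T' x] at *
    omega

variable {L L' : List ℕ}

lemma eq_of_sum_eq_minSum (hs : L.Pairwise (· ≥ ·)) (hs' : L'.Pairwise (· ≥ ·))
    (hpos : ∀ x ∈ L, 0 < x) (hpos' : ∀ x ∈ L', 0 < x) (hk : durfee L = durfee L')
    (hd : ∀ i < durfee L, rankDiff L i = rankDiff L' i)
    (h : L.sum = minSum L) (h' : L'.sum = minSum L') : L = L' := by
  have hdrops : ∀ i < durfee L, armDrop L i = armDrop L' i ∧ legDrop L i = legDrop L' i := by
    intro i hi
    have h₁ := (sum_eq_minSum_iff hs).mp h i hi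
    have h₂ := (sum_eq_minSum_iff hs').mp h' i (hk ▸ hi)
    have := hd i hi
    rw [rankDiff_eq_armDrop_sub_legDrop, rankDiff_eq_armDrop_sub_legDrop] at this
    have := armDrop_nonneg hs i
    have := armDrop_nonneg hs' i
    have := legDrop_nonneg L i
    have := legDrop_nonneg L' i
    omega
  have hexcess : (fun i => (excess L i : ℤ)) = fun i => (excess L' i : ℤ) :=
    eq_of_sub_succ_eq (fun i hi => by simp [excess_eq_zero hs hi])
      (fun i hi => by simp [excess_eq_zero hs' (hk ▸ hi)]) fun i hi => (hdrops i hi).1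
  have hleg : (fun i => (legCount L (i + 1) : ℤ)) = fun i => (legCount L' (i + 1) : ℤ) :=
    eq_of_sub_succ_eq (fun i hi => by simp [legCount_eq_zero hs (Nat.lt_succ_of_le hi)])
      (fun i hi => by simp [legCount_eq_zero hs' (Nat.lt_succ_of_le (hk ▸ hi))])
      fun i hi => (hdrops i hi).2
  rw [← List.take_append_drop (durfee L) L, ← List.take_append_drop (durfee L') L',
    take_durfee hs, take_durfee hs', ← hk]
  congr 1
  · exact List.map_congr_left fun i _ => by
      rw [Nat.cast_inj.mp (congrFun hexcess i)]
  · refine eq_of_countP_le_eq (hs.sublist (List.drop_sublist _ _))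
      (hs'.sublist (List.drop_sublist _ _)) (fun x hx => hpos x (List.mem_of_mem_drop hx))
      (fun x hx => hpos' x (List.mem_of_mem_drop hx)) fun j hj => ?_
    obtain ⟨i, rfl⟩ := Nat.exists_eq_add_of_le' hj
    have := Nat.cast_inj.mp (congrFun hleg i)
    rwa [legCount, legCount, ← hk] at this

/-- The witness has drops `armDrop = max d 0` and `legDrop = max (-d) 0`. -/
lemma exists_sum_eq_minSum {k : ℕ} (d : Fin k → ℤ) :
    ∃ L : List ℕ, L.Pairwise (· ≥ ·) ∧ (∀ x ∈ L, 0 < x) ∧ durfee L = k ∧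
      (∀ i : Fin k, rankDiff L i = d i) ∧ L.sum = minSum L := by
  set D : ℕ → ℤ := fun i => if h : i < k then d ⟨i, h⟩ else 0
  set A : ℕ → ℕ := fun i => ∑ t ∈ Ico i k, (D t).toNat
  set B : ℕ → ℕ := fun j => ∑ t ∈ Ico (j - 1) k, (-D t).toNat
  have hA : Antitone A := fun i j hij => sum_le_sum_of_subset (Ico_subset_Ico_left hij)
  have hB : Antitone B := fun i j hij => sum_le_sum_of_subset (Ico_subset_Ico_left (by omega))
  have hAk : A k = 0 := by simp [A]
  have hBk : B (k + 1) = 0 := by simp [B]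
  have hs := assemble_pairwise hA hBk
  have hk := durfee_assemble hA hBk
  have harm : ∀ i < k, armDrop (assemble k A B) i = (D i).toNat := by
    intro i hi
    rw [armDrop, excess_assemble hA hBk hAk, excess_assemble hA hBk hAk]
    simp only [A, sum_eq_sum_Ico_succ_bot hi]
    push_cast
    ring
  have hleg : ∀ i < k, legDrop (assemble k A B) i = (-D i).toNat := by
    intro i hi
    rw [legDrop, legCount_assemble hA hB hBk (by omega), legCount_assemble hA hB hBk (by omega)]
    simp only [B, Nat.add_sub_cancel, show i + 2 - 1 = i + 1 by omega,
      sum_eq_sum_Ico_succ_bot hi]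
    push_cast
    ring
  refine ⟨assemble k A B, hs, fun _ hx => assemble_pos hBk hx, hk, fun i => ?_,
    (sum_eq_minSum_iff hs).mpr fun i hi => ?_⟩
  · rw [rankDiff_eq_armDrop_sub_legDrop, harm i i.2, hleg i i.2, Int.toNat_sub_toNat_neg]
    simp [D]
  · rw [hk] at hi
    rw [harm i hi, hleg i hi]
    omega

end Realization

section Partitions

variable {n : ℕ}

lemma sparts_pairwise (π : n.Partition) : (sparts π).Pairwise (· ≥ ·) :=
  Multiset.pairwise_sort _ _

lemma sparts_pos (π : n.Partition) : ∀ x ∈ sparts π, 0 < x := fun _ hx =>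
  π.parts_pos ((Multiset.mem_sort _).mp hx)

lemma sum_sparts (π : n.Partition) : (sparts π).sum = n := by
  rw [← Multiset.sum_coe, sparts, Multiset.sort_eq, π.parts_sum]

lemma sparts_injective : Function.Injective (sparts (n := n)) := fun π π' h => by
  refine Nat.Partition.ext ?_
  rw [← Multiset.sort_eq π.parts (· ≥ ·), ← Multiset.sort_eq π'.parts (· ≥ ·)]
  exact congrArg _ h

lemma sparts_ofSums {L : List ℕ} (hs : L.Pairwise (· ≥ ·)) (hpos : ∀ x ∈ L, 0 < x)
    (hsum : (L : Multiset ℕ).sum = n) : sparts (Nat.Partition.ofSums n L hsum) = L := by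
  refine List.Perm.eq_of_pairwise' (Multiset.pairwise_sort _ _) hs ?_
  rw [← Multiset.coe_eq_coe, sparts, Multiset.sort_eq]
  exact Multiset.filter_eq_self.mpr fun x hx => (hpos x (Multiset.mem_coe.mp hx)).ne'

theorem isBasis_iff_eq_minSum (π : n.Partition) : IsBasis π ↔ n = minSum (sparts π) := by
  have hs := sparts_pairwise π
  constructor
  · intro hb
    obtain ⟨L, hsL, hpos, hk, hd, hsum⟩ :=
      exists_sum_eq_minSum fun i : Fin (durfee (sparts π)) => rankDiff (sparts π) i
    have hr : ranks L = ranks (sparts π) :=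
      (ranks_eq_ranks_iff hsL hs).mpr ⟨hk, fun i hi => hd ⟨i, hk ▸ hi⟩⟩
    have hle := hb L.sum (Nat.Partition.ofSums _ L (Multiset.sum_coe L))
      (by rw [sparts_ofSums hsL hpos]; exact hr)
    have hge := minSum_le_sum hs
    rw [sum_sparts] at hge
    rw [hsum, minSum_eq_of_ranks_eq hsL hs hr] at hle
    omega
  · intro h m π' hr
    calc n = minSum (sparts π) := h
      _ = minSum (sparts π') := minSum_eq_of_ranks_eq hs (sparts_pairwise π') hr.symm
      _ ≤ m := (minSum_le_sum (sparts_pairwise π')).trans (sum_sparts π').le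

end Partitions

section Counting

def weight {k : ℕ} (d : Fin k → ℤ) : ℕ := ∑ i : Fin k, ((i : ℕ) + 1) * (d i).natAbs

noncomputable def weightSet (k m : ℕ) : Finset (Fin k → ℤ) :=
  {d ∈ Fintype.piFinset fun _ => Icc (-m : ℤ) m | weight d = m}

lemma mem_weightSet {k m : ℕ} {d : Fin k → ℤ} : d ∈ weightSet k m ↔ weight d = m := by
  simp only [weightSet, mem_filter, Fintype.mem_piFinset, mem_Icc, and_iff_right_iff_imp]
  intro h i
  have : (d i).natAbs ≤ m := h ▸ (Nat.le_mul_of_pos_left _ (Nat.succ_pos _)).trans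
    (single_le_sum (f := fun j : Fin k => ((j : ℕ) + 1) * (d j).natAbs)
      (fun _ _ => Nat.zero_le _) (mem_univ i))
  omega

lemma minSum_eq_sq_add_weight {L : List ℕ} {k : ℕ} (hk : durfee L = k) :
    minSum L = k ^ 2 + weight fun i : Fin k => rankDiff L i := by
  subst hk
  rw [minSum, weight, Fin.sum_univ_eq_sum_range (fun i => (i + 1) * (rankDiff L i).natAbs)]

theorem bCount_sq_add (k m : ℕ) : bCount (k ^ 2 + m) k = #(weightSet k m) := by
  have hmin : ∀ π : (k ^ 2 + m).Partition, IsBasis π → (sparts π).sum = minSum (sparts π) :=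
    fun π hb => (sum_sparts π).trans ((isBasis_iff_eq_minSum π).mp hb)
  rw [bCount, ← Nat.card_eq_finsetCard]
  refine Nat.card_eq_of_bijective (fun π => ⟨fun i => rankDiff (sparts π.1) i, ?_⟩) ⟨?_, ?_⟩
  · have := (isBasis_iff_eq_minSum π.1).mp π.2.1
    rw [minSum_eq_sq_add_weight π.2.2] at this
    exact mem_weightSet.mpr (by omega)
  · rintro ⟨π, hb, hk⟩ ⟨π', hb', hk'⟩ h
    have h := congrArg Subtype.val h
    refine Subtype.ext (sparts_injective (eq_of_sum_eq_minSum (sparts_pairwise π)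
      (sparts_pairwise π') (sparts_pos π) (sparts_pos π') (hk.trans hk'.symm)
      (fun i hi => congrFun h ⟨i, hk ▸ hi⟩) (hmin π hb) (hmin π' hb')))
  · rintro ⟨d, hd⟩
    obtain ⟨L, hs, hpos, hk, hdL, hsum⟩ := exists_sum_eq_minSum d
    have hLsum : (L : Multiset ℕ).sum = k ^ 2 + m := by
      rw [Multiset.sum_coe, hsum, minSum_eq_sq_add_weight hk, funext hdL, mem_weightSet.mp hd]
    have hπ := sparts_ofSums hs hpos hLsum
    refine ⟨⟨Nat.Partition.ofSums _ L hLsum, ?_, ?_⟩, ?_⟩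
    · rw [isBasis_iff_eq_minSum, hπ, ← hsum, ← Multiset.sum_coe, hLsum]
    · rw [hπ, hk]
    · exact Subtype.ext (funext fun i => by simp only [hπ, hdL])

theorem bCount_eq_zero {n k : ℕ} (h : n < k ^ 2) : bCount n k = 0 := by
  rw [bCount, Nat.card_eq_zero]
  refine Or.inl ⟨fun ⟨π, _, hk⟩ => ?_⟩
  have := sum_eq_sq_add (sparts_pairwise π)
  rw [sum_sparts, hk] at this
  omega

end Counting

section GeneratingFunction

open PowerSeries

lemma dvd_prod_sub_prod {R ι : Type*} [CommRing R] {a : R} (s : Finset ι) {f g : ι → R}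
    (h : ∀ i ∈ s, a ∣ f i - g i) : a ∣ ∏ i ∈ s, f i - ∏ i ∈ s, g i := by
  rw [← Ideal.mem_span_singleton, ← Ideal.Quotient.eq, map_prod, map_prod]
  exact prod_congr rfl fun i hi => Ideal.Quotient.eq.mpr (Ideal.mem_span_singleton.mpr (h i hi))

lemma one_sub_X_pow_mul_sum_Icc {R : Type*} [CommRing R] (s M : ℕ) :
    (1 - X ^ s) * ∑ z ∈ Icc (-M : ℤ) M, (X : R⟦X⟧) ^ (s * z.natAbs) =
      1 + X ^ s - 2 * X ^ (s * (M + 1)) := by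
  induction M with
  | zero => simp; ring
  | succ M ih =>
    have hIcc : Icc (-(M + 1 : ℕ) : ℤ) (M + 1 : ℕ) =
        insert ((M : ℤ) + 1) (insert (-(M : ℤ) - 1) (Icc (-M : ℤ) M)) := by
      ext z
      simp only [mem_Icc, mem_insert]
      omega
    have h₁ : ((M : ℤ) + 1).natAbs = M + 1 := by omega
    have h₂ : (-(M : ℤ) - 1).natAbs = M + 1 := by omega
    rw [hIcc, sum_insert (by simp; omega), sum_insert (by simp), h₁, h₂]
    linear_combination ih

variable {K : Type*} [Field K]

lemma X_pow_dvd_factor_sub {s : ℕ} (hs : 0 < s) (M : ℕ) :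
    (X : K⟦X⟧) ^ (M + 1) ∣
      (1 + X ^ s) * (1 - X ^ s)⁻¹ - ∑ z ∈ Icc (-M : ℤ) M, X ^ (s * z.natAbs) := by
  set P := ∑ z ∈ Icc (-M : ℤ) M, (X : K⟦X⟧) ^ (s * z.natAbs)
  have hu : (1 - X ^ s : K⟦X⟧) * (1 - X ^ s)⁻¹ = 1 :=
    PowerSeries.mul_inv_cancel _ (by simp [hs.ne'])
  have key :
      (1 + X ^ s) * (1 - X ^ s)⁻¹ - P = (X : K⟦X⟧) ^ (s * (M + 1)) * (2 * (1 - X ^ s)⁻¹) := by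
    linear_combination (-(1 - X ^ s : K⟦X⟧)⁻¹) * one_sub_X_pow_mul_sum_Icc (R := K) s M + P * hu
  rw [key]
  exact (pow_dvd_pow X (Nat.le_mul_of_pos_left _ hs)).mul_right _

lemma coeff_prod_eq_card_weightSet (k m : ℕ) :
    coeff m (∏ j ∈ range k, (1 + X ^ (j + 1)) * (1 - X ^ (j + 1) : K⟦X⟧)⁻¹) =
      (#(weightSet k m) : K) := by
  set P : ℕ → K⟦X⟧ := fun s => ∑ z ∈ Icc (-m : ℤ) m, X ^ (s * z.natAbs)
  -- Modulo `X ^ (m + 1)`, each factor agrees with its truncation `P (j + 1)`.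
  have htrunc := X_pow_dvd_iff.mp (dvd_prod_sub_prod (range k) fun j _ =>
    X_pow_dvd_factor_sub (K := K) (s := j + 1) (by omega) m) m (Nat.lt_succ_self m)
  rw [map_sub, sub_eq_zero] at htrunc
  rw [htrunc, ← Fin.prod_univ_eq_prod_range (fun j => P (j + 1)), prod_univ_sum]
  have hprod (d : Fin k → ℤ) :
      ∏ i : Fin k, (X : K⟦X⟧) ^ (((i : ℕ) + 1) * (d i).natAbs) = X ^ weight d :=
    prod_pow_eq_pow_sum _ _ _
  simp only [hprod, map_sum, coeff_X_pow, sum_boole, weightSet, eq_comm]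

end GeneratingFunction

theorem statement1 (k : ℕ) :
    (PowerSeries.mk fun n => (bCount n k : ℚ)) =
      PowerSeries.X ^ (k ^ 2) *
        ∏ j ∈ Finset.range k,
          (1 + PowerSeries.X ^ (j + 1)) * (1 - PowerSeries.X ^ (j + 1) : PowerSeries ℚ)⁻¹ := by
  ext n
  rw [PowerSeries.coeff_mk, PowerSeries.coeff_X_pow_mul']
  split_ifs with h
  · obtain ⟨m, rfl⟩ := Nat.exists_eq_add_of_le h
    rw [Nat.add_sub_cancel_left, coeff_prod_eq_card_weightSet, bCount_sq_add]
  · rw [bCount_eq_zero (not_le.mp h), Nat.cast_zero]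

end BasisPartitions
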